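/- Assume g satisfies (G1) with limit 1/q. Then lim_{s→∞} (log g(s))/(log g'(s)) = q. -/

import Mathlib

/-!
Write `H = g g'' / g'^2`. As `H → 1/q > 0`, eventually `g' ≠ 0`, so by Darboux's theorem `g'` has
a constant sign; it must be positive, and `g` must tend to `∞`, since otherwise `1/g` would stay
above a positive constant and could not be integrable. Now `H` is the quotient of the derivatives
of `log g'` and `log g`, so L'Hôpital's rule in its `∞/∞` form (which only needs the denominator
to tend to `∞`) gives `log g' / log g → 1/q`.
-/

open Real Filter Set MeasureTheory

section Monotonicity

variable {f f' : ℝ → ℝ} {T : ℝ}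

lemma monotoneOn_Ici_of_hasDerivAt_nonneg (hf : ∀ x ∈ Ici T, HasDerivAt f (f' x) x)
    (hf' : ∀ x ∈ Ici T, 0 ≤ f' x) : MonotoneOn f (Ici T) :=
  monotoneOn_of_hasDerivWithinAt_nonneg (convex_Ici T)
    (fun x hx => (hf x hx).continuousAt.continuousWithinAt)
    (fun x hx => (hf x (interior_subset hx)).hasDerivWithinAt)
    (fun x hx => hf' x (interior_subset hx))

lemma antitoneOn_Ici_of_hasDerivAt_nonpos (hf : ∀ x ∈ Ici T, HasDerivAt f (f' x) x)
    (hf' : ∀ x ∈ Ici T, f' x ≤ 0) : AntitoneOn f (Ici T) :=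
  antitoneOn_of_hasDerivWithinAt_nonpos (convex_Ici T)
    (fun x hx => (hf x hx).continuousAt.continuousWithinAt)
    (fun x hx => (hf x (interior_subset hx)).hasDerivWithinAt)
    (fun x hx => hf' x (interior_subset hx))

end Monotonicity

section IntegrableReciprocal

variable {g g' : ℝ → ℝ} {T : ℝ}

lemma exists_lt_of_integrableOn_one_div (hpos : ∀ x ∈ Ici T, 0 < g x)
    (hint : IntegrableOn (fun x => 1 / g x) (Ici T)) (M : ℝ) : ∃ x ∈ Ici T, M < g x := by
  by_contra! hle
  have hM : 0 < M := (hpos T self_mem_Ici).trans_le (hle T self_mem_Ici)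
  have hconst : IntegrableOn (fun _ => 1 / M) (Ici T) := by
    refine hint.mono' aestronglyMeasurable_const ?_
    filter_upwards [ae_restrict_mem measurableSet_Ici] with x hx
    rw [Real.norm_eq_abs, abs_of_pos (one_div_pos.2 hM)]
    exact one_div_le_one_div_of_le (hpos x hx) (hle x hx)
  rw [integrableOn_const_iff, Real.volume_Ici] at hconst
  simp only [enorm_eq_zero, lt_self_iff_false, or_false] at hconst
  exact (one_div_pos.2 hM).ne' hconst

lemma eventually_pos_of_hasDerivAt_ne_zero_of_integrableOn_one_div
    (hg : ∀ᶠ x in atTop, HasDerivAt g (g' x) x) (hg' : ∀ᶠ x in atTop, g' x ≠ 0)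
    (hpos : ∀ᶠ x in atTop, 0 < g x)
    (hint : ∀ᶠ T in atTop, IntegrableOn (fun x => 1 / g x) (Ici T)) :
    ∀ᶠ x in atTop, 0 < g' x := by
  obtain ⟨T, hT⟩ := eventually_atTop.1 (hg.and (hg'.and (hpos.and hint)))
  refine eventually_atTop.2 ⟨T, (hasDerivWithinAt_forall_lt_or_forall_gt_of_forall_ne
    (convex_Ici T) (fun x hx => (hT x hx).1.hasDerivWithinAt)
    (fun x hx => (hT x hx).2.1)).resolve_left fun hneg => ?_⟩
  have hanti := antitoneOn_Ici_of_hasDerivAt_nonpos (fun x hx => (hT x hx).1)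
    fun x hx => (hneg x hx).le
  obtain ⟨x, hx, hlt⟩ := exists_lt_of_integrableOn_one_div (fun x hx => (hT x hx).2.2.1)
    (hT T le_rfl).2.2.2 (g T)
  exact (hanti self_mem_Ici hx hx).not_gt hlt

lemma tendsto_atTop_of_hasDerivAt_nonneg_of_integrableOn_one_div
    (hg : ∀ᶠ x in atTop, HasDerivAt g (g' x) x) (hg' : ∀ᶠ x in atTop, 0 ≤ g' x)
    (hpos : ∀ᶠ x in atTop, 0 < g x)
    (hint : ∀ᶠ T in atTop, IntegrableOn (fun x => 1 / g x) (Ici T)) :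
    Tendsto g atTop atTop := by
  obtain ⟨T, hT⟩ := eventually_atTop.1 (hg.and (hg'.and (hpos.and hint)))
  have hmono := monotoneOn_Ici_of_hasDerivAt_nonneg (fun x hx => (hT x hx).1)
    fun x hx => (hT x hx).2.1
  refine tendsto_atTop.2 fun M => ?_
  obtain ⟨x, hx, hlt⟩ := exists_lt_of_integrableOn_one_div (fun x hx => (hT x hx).2.2.1)
    (hT T le_rfl).2.2.2 M
  exact eventually_atTop.2 ⟨x, fun y hy =>
    hlt.le.trans (hmono hx (mem_Ici.2 (le_trans hx hy)) hy)⟩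

end IntegrableReciprocal

section LHopital

variable {u v u' v' : ℝ → ℝ}

lemma eventually_div_lt_of_hasDerivAt_of_tendsto_atTop
    (hu : ∀ᶠ x in atTop, HasDerivAt u (u' x) x) (hv : ∀ᶠ x in atTop, HasDerivAt v (v' x) x)
    (hvtop : Tendsto v atTop atTop) {c a : ℝ} (hc : ∀ᶠ x in atTop, u' x ≤ c * v' x)
    (hca : c < a) : ∀ᶠ x in atTop, u x / v x < a := by
  obtain ⟨T, hT⟩ := eventually_atTop.1 (hu.and (hv.and hc))
  have hanti : AntitoneOn (fun x => u x - c * v x) (Ici T) :=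
    antitoneOn_Ici_of_hasDerivAt_nonpos (fun x hx => (hT x hx).1.sub ((hT x hx).2.1.const_mul c))
      fun x hx => by linarith [(hT x hx).2.2]
  filter_upwards [eventually_ge_atTop T, hvtop.eventually_gt_atTop 0,
    hvtop.eventually_gt_atTop ((u T - c * v T) / (a - c))] with x hxT hv0 hvbig
  have hbound : u x - c * v x ≤ u T - c * v T := hanti self_mem_Ici hxT hxT
  rw [div_lt_iff₀ (sub_pos.2 hca)] at hvbig
  rw [div_lt_iff₀ hv0]
  nlinarith

theorem lhopital_atTop_of_tendsto_atTop {L : ℝ}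
    (hu : ∀ᶠ x in atTop, HasDerivAt u (u' x) x) (hv : ∀ᶠ x in atTop, HasDerivAt v (v' x) x)
    (hv' : ∀ᶠ x in atTop, 0 < v' x) (hvtop : Tendsto v atTop atTop)
    (hdiv : Tendsto (fun x => u' x / v' x) atTop (nhds L)) :
    Tendsto (fun x => u x / v x) atTop (nhds L) := by
  refine tendsto_order.2 ⟨fun a haL => ?_, fun a hLa => ?_⟩
  · have hc : ∀ᶠ x in atTop, -u' x ≤ -((L + a) / 2) * v' x := by
      filter_upwards [hdiv.eventually (lt_mem_nhds (by linarith : (L + a) / 2 < L)), hv']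
        with x hx hx'
      rw [lt_div_iff₀ hx'] at hx
      linarith
    have hneg := eventually_div_lt_of_hasDerivAt_of_tendsto_atTop (u := fun x => -u x)
      (hu.mono fun x hx => hx.neg) hv hvtop hc (by linarith : -((L + a) / 2) < -a)
    filter_upwards [hneg] with x hx
    rw [neg_div] at hx
    linarith
  · have hc : ∀ᶠ x in atTop, u' x ≤ (L + a) / 2 * v' x := by
      filter_upwards [hdiv.eventually (gt_mem_nhds (by linarith : L < (L + a) / 2)), hv']
        with x hx hx'
      rw [div_lt_iff₀ hx'] at hx
      linarith
    exact eventually_div_lt_of_hasDerivAt_of_tendsto_atTop hu hv hvtop hc (by linarith)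

end LHopital

lemma ContDiffOn.eventually_hasDerivAt_deriv_deriv {f : ℝ → ℝ} {a : ℝ}
    (hf : ContDiffOn ℝ 2 f (Ici a)) : ∀ᶠ x in atTop,
      HasDerivAt f (deriv f x) x ∧ HasDerivAt (deriv f) (deriv (deriv f) x) x := by
  have hf' : ContDiffOn ℝ 2 f (Ioi a) := hf.mono Ioi_subset_Ici_self
  have hdf : ContDiffOn ℝ 1 (deriv f) (Ioi a) := hf'.deriv_of_isOpen isOpen_Ioi (by norm_num)
  filter_upwards [eventually_gt_atTop a] with x hx
  have hnhds : Ioi a ∈ nhds x := isOpen_Ioi.mem_nhds hx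
  exact ⟨((hf'.differentiableOn (by norm_num)).differentiableAt hnhds).hasDerivAt,
    ((hdf.differentiableOn one_ne_zero).differentiableAt hnhds).hasDerivAt⟩

/-- Under (G1), (log g(s))/(log g'(s)) → q as s → ∞. -/
theorem stmt_4 (g : ℝ → ℝ) (s₀ q : ℝ) (hq : 1 ≤ q)
    (hC2 : ContDiffOn ℝ 2 g (Ici s₀))
    (hgpos : ∀ s ∈ Ici s₀, 0 < g s)
    (hint : ∀ᶠ s in atTop, IntegrableOn (fun u => 1 / g u) (Ici s))
    (hlim : Tendsto (fun s => g s * deriv (deriv g) s / (deriv g s) ^ 2)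
      atTop (nhds (1 / q))) :
    Tendsto (fun s => Real.log (g s) / Real.log (deriv g s)) atTop (nhds q) := by
  have hq0 : 0 < q := one_pos.trans_le hq
  obtain ⟨hdg, hddg⟩ := eventually_and.1 hC2.eventually_hasDerivAt_deriv_deriv
  have hg_pos : ∀ᶠ s in atTop, 0 < g s := eventually_atTop.2 ⟨s₀, hgpos⟩
  have hne : ∀ᶠ s in atTop, deriv g s ≠ 0 := by
    filter_upwards [hlim.eventually (eventually_gt_nhds (one_div_pos.2 hq0))] with s hs h0
    simp [h0] at hs
  have hdg_pos := eventually_pos_of_hasDerivAt_ne_zero_of_integrableOn_one_div hdg hne hg_pos hint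
  have hgtop := tendsto_atTop_of_hasDerivAt_nonneg_of_integrableOn_one_div hdg
    (hdg_pos.mono fun s hs => hs.le) hg_pos hint
  have hlog : Tendsto (fun s => Real.log (deriv g s) / Real.log (g s)) atTop (nhds (1 / q)) := by
    refine lhopital_atTop_of_tendsto_atTop (u' := fun s => deriv (deriv g) s / deriv g s)
      (v' := fun s => deriv g s / g s) ?_ ?_ ?_ (tendsto_log_atTop.comp hgtop) (hlim.congr' ?_)
    · filter_upwards [hddg, hdg_pos] with s hs hs' using hs.log hs'.ne'
    · filter_upwards [hdg, hg_pos] with s hs hs' using hs.log hs'.ne'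
    · filter_upwards [hdg_pos, hg_pos] with s hs hs' using div_pos hs hs'
    · filter_upwards [hdg_pos, hg_pos] with s hs hs'
      field_simp
  simpa only [inv_div, one_div, inv_inv] using hlog.inv₀ (one_div_pos.2 hq0).ne'
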